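/- For every integer n ≥ 2, R(n) = 2 if and only if n = 3 or n + 1 is prime. -/

import Mathlib

/-- A partition encoded as its list of parts in weakly decreasing order,
all parts positive. -/
def IsPartition (l : List ℕ) : Prop :=
  List.Pairwise (· ≥ ·) l ∧ ∀ x ∈ l, 0 < x

/-- Auxiliary: given the previous part and the remaining parts (read from the
smallest part upward), produce the rest of the boundary word. -/
def wordAux : ℕ → List ℕ → List Bool
  | _, [] => []
  | prev, a :: rest => (false :: List.replicate (a - prev) true) ++ wordAux a rest

/-- `partitionWord l` is the word `B(λ)`: trace the southeast boundary of the
Young diagram of `λ` from southwest to northeast, recording `true` for each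
horizontal step and `false` for each vertical step, then delete the initial
`true` and the final `false`. -/
def partitionWord (l : List ℕ) : List Bool :=
  match l.reverse with
  | [] => []
  | a :: rest => List.replicate (a - 1) true ++ wordAux a rest

/-- The conjugate (transpose) partition. -/
def conjugate (l : List ℕ) : List ℕ :=
  (List.range l.headI).map fun j => (l.filter fun x => decide (j < x)).length

/-- `PP n` is the number of palindrome partitions of `n`. -/
noncomputable def PP (n : ℕ) : ℕ :=
  {l : List ℕ | IsPartition l ∧ l.sum = n ∧
    partitionWord l = (partitionWord l).reverse}.ncard

/-- `RCount n` is the number of partitions `λ` of `n` such that the partition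
corresponding to the reversed word `B(λ)ʳ` is also a partition of `n`. -/
noncomputable def RCount (n : ℕ) : ℕ :=
  {l : List ℕ | IsPartition l ∧ l.sum = n ∧
    ∃ μ : List ℕ, IsPartition μ ∧ μ.sum = n ∧
      partitionWord μ = (partitionWord l).reverse}.ncard

/-- `T n k` is the number of nondecreasing sequences of `n` integers in
`[-k, k]` summing to zero. -/
noncomputable def T (n k : ℕ) : ℕ :=
  {f : Fin n → ℤ | (∀ i j : Fin n, i ≤ j → f i ≤ f j) ∧
    (∀ i, -(k : ℤ) ≤ f i ∧ f i ≤ (k : ℤ)) ∧ ∑ i, f i = 0}.ncard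

/-- `NRect a b` is the number of partitions of `a*b/2` with at most `a` parts,
each part at most `b`. -/
noncomputable def NRect (a b : ℕ) : ℕ :=
  {μ : Fin a → ℕ | (∀ i j : Fin a, i ≤ j → μ j ≤ μ i) ∧
    (∀ i, μ i ≤ b) ∧ ∑ i, μ i = a * b / 2}.ncard

/-!
Prepending `1` and appending `0` to `B(λ)` gives the full boundary word of `λ`, whose
inversions (pairs `1 … 0`) are exactly the cells of `λ`; hence
`|λ| = inv B(λ) + |B(λ)| + 1`. As `inv w + inv wʳ = #₁(w) · #₀(w)`, the partitions `λ` and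
`P(B(λ)ʳ)` both have size `n` only if `(#₁ + 2)(#₀ + 2) = 2(n + 1)`. If `n = 3` or `n + 1` is
prime this forces `#₁ = 0` or `#₀ = 0`, i.e. `λ = (n)` or `λ = (1ⁿ)`. Otherwise
`n + 1 = (a + 1)(q + 2)` with `a, q ≥ 1`, and `(2a + 1, (a + 1)^q)` is a third solution: its
word `1^a 0^q 1^a` is a palindrome.
-/

def inversions : List Bool → ℕ
  | [] => 0
  | b :: t => (if b then t.count false else 0) + inversions t

lemma inversions_append (u v : List Bool) :
    inversions (u ++ v) = inversions u + inversions v + u.count true * v.count false := by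
  induction u with
  | nil => simp [inversions]
  | cons b t ih => cases b <;> simp [inversions, ih, List.count_append]; ring

lemma inversions_replicate_true (k : ℕ) : inversions (List.replicate k true) = 0 := by
  induction k with
  | zero => rfl
  | succ k ih => simp [List.replicate_succ, inversions, ih, List.count_replicate]

lemma inversions_add_inversions_reverse (w : List Bool) :
    inversions w + inversions w.reverse = w.count true * w.count false := by
  induction w with
  | nil => rfl
  | cons b t ih =>
    rw [List.reverse_cons, inversions_append]
    cases b <;> simp [inversions, List.count_reverse] <;> ring_nf at ih ⊢ <;> omega

lemma count_false_wordAux (prev : ℕ) (L : List ℕ) :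
    (wordAux prev L).count false = L.length := by
  induction L generalizing prev with
  | nil => rfl
  | cons a rest ih => simp [wordAux, List.count_append, List.count_replicate, ih]

lemma sum_wordAux {prev : ℕ} {L : List ℕ} (h : (prev :: L).Pairwise (· ≤ ·)) :
    L.sum = inversions (wordAux prev L) + prev * L.length + (wordAux prev L).count true := by
  induction L generalizing prev with
  | nil => simp [wordAux, inversions]
  | cons a rest ih =>
    obtain ⟨hprev, hrest⟩ := List.pairwise_cons.mp h
    have hpa : prev ≤ a := hprev a List.mem_cons_self
    have hsub : (a - prev) * rest.length + prev * rest.length = a * rest.length := by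
      rw [← Nat.add_mul, Nat.sub_add_cancel hpa]
    have : prev * (rest.length + 1) = prev * rest.length + prev := by ring
    rw [wordAux, inversions_append, List.count_append, List.sum_cons, ih hrest]
    simp [inversions, count_false_wordAux, inversions_replicate_true]
    omega

lemma le_add_count_true_wordAux {prev x : ℕ} {L : List ℕ} (h : (prev :: L).Pairwise (· ≤ ·))
    (hx : x ∈ L) : x ≤ prev + (wordAux prev L).count true := by
  induction L generalizing prev with
  | nil => simp at hx
  | cons a rest ih =>
    obtain ⟨hprev, hrest⟩ := List.pairwise_cons.mp h
    have hpa : prev ≤ a := hprev a List.mem_cons_self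
    have hcount : (wordAux prev (a :: rest)).count true =
        a - prev + (wordAux a rest).count true := by
      simp [wordAux]
    rw [hcount]
    rcases List.mem_cons.mp hx with rfl | hx
    · omega
    · have := ih hrest hx
      omega

lemma IsPartition.exists_reverse_eq_cons {l : List ℕ} (hl : IsPartition l) (hne : l ≠ []) :
    ∃ a rest, l.reverse = a :: rest ∧ 0 < a ∧ (a :: rest).Pairwise (· ≤ ·) := by
  obtain ⟨a, rest, h⟩ := List.exists_cons_of_ne_nil (List.reverse_ne_nil_iff.mpr hne)
  exact ⟨a, rest, h, hl.2 a (List.mem_reverse.mp (h ▸ List.mem_cons_self)),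
    h ▸ List.pairwise_reverse.mpr hl.1⟩

lemma partitionWord_of_reverse_eq_cons {l rest : List ℕ} {a : ℕ} (h : l.reverse = a :: rest) :
    partitionWord l = List.replicate (a - 1) true ++ wordAux a rest := by
  simp [partitionWord, h]

lemma count_false_partitionWord (l : List ℕ) :
    (partitionWord l).count false = l.length - 1 := by
  cases h : l.reverse with
  | nil => simp_all [partitionWord]
  | cons a rest =>
    have hlen : l.length = rest.length + 1 := by simpa using congrArg List.length h
    simp [partitionWord_of_reverse_eq_cons h, List.count_append, List.count_replicate,
      count_false_wordAux, hlen]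

lemma IsPartition.le_count_true_partitionWord_add_one {l : List ℕ} (hl : IsPartition l)
    {x : ℕ} (hx : x ∈ l) : x ≤ (partitionWord l).count true + 1 := by
  obtain ⟨a, rest, h, ha, hpair⟩ := hl.exists_reverse_eq_cons (List.ne_nil_of_mem hx)
  rw [partitionWord_of_reverse_eq_cons h, List.count_append, List.count_replicate_self]
  rcases List.mem_cons.mp (h ▸ List.mem_reverse.mpr hx) with rfl | hx
  · omega
  · have := le_add_count_true_wordAux hpair hx
    omega

lemma IsPartition.sum_eq {l : List ℕ} (hl : IsPartition l) (hne : l ≠ []) :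
    l.sum = inversions (partitionWord l) + (partitionWord l).count true
      + (partitionWord l).count false + 1 := by
  obtain ⟨a, rest, h, ha, hpair⟩ := hl.exists_reverse_eq_cons hne
  have hsum : l.sum = a + rest.sum := by rw [← List.sum_reverse, h, List.sum_cons]
  have hsub : (a - 1) * rest.length + rest.length = a * rest.length := by
    rw [← Nat.succ_mul, Nat.succ_eq_add_one, Nat.sub_add_cancel ha]
  rw [partitionWord_of_reverse_eq_cons h, inversions_append, List.count_append,
    List.count_append, hsum, sum_wordAux hpair]
  simp [inversions_replicate_true, List.count_replicate, count_false_wordAux]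
  omega

lemma IsPartition.eq_replicate_one_sum {l : List ℕ} (hl : IsPartition l)
    (h : (partitionWord l).count true = 0) : l = List.replicate l.sum 1 := by
  have hl1 : l = List.replicate l.length 1 := List.eq_replicate_iff.mpr ⟨rfl, fun x hx => by
    have := hl.le_count_true_partitionWord_add_one hx
    have := hl.2 x hx
    omega⟩
  have hsum : l.sum = l.length := by rw [hl1]; simp
  rwa [hsum]

lemma eq_singleton_sum_of_count_false_partitionWord {l : List ℕ} (hne : l ≠ [])
    (h : (partitionWord l).count false = 0) : l = [l.sum] := by
  rw [count_false_partitionWord] at h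
  obtain ⟨a, rfl⟩ := List.length_eq_one_iff.mp
    (le_antisymm (by omega) (List.length_pos_iff.mpr hne))
  simp

lemma wordAux_replicate_self_append (a k : ℕ) (L : List ℕ) :
    wordAux a (List.replicate k a ++ L) = List.replicate k false ++ wordAux a L := by
  induction k with
  | zero => rfl
  | succ k ih => simp [List.replicate_succ, wordAux, ih]

lemma partitionWord_singleton (n : ℕ) : partitionWord [n] = List.replicate (n - 1) true := by
  simp [partitionWord, wordAux]

lemma partitionWord_replicate_one (k : ℕ) :
    partitionWord (List.replicate (k + 1) 1) = List.replicate k false := by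
  have h : (List.replicate (k + 1) 1).reverse = 1 :: List.replicate k 1 := by
    rw [List.reverse_replicate, List.replicate_succ]
  simpa [partitionWord_of_reverse_eq_cons h, wordAux] using wordAux_replicate_self_append 1 k []

def palindromeWitness (a q : ℕ) : List ℕ := (2 * a + 1) :: List.replicate q (a + 1)

lemma isPartition_palindromeWitness (a q : ℕ) : IsPartition (palindromeWitness a q) := by
  refine ⟨List.pairwise_cons.mpr ⟨fun x hx => ?_, List.pairwise_replicate.mpr (.inr le_rfl)⟩,
    fun x hx => ?_⟩
  · rw [List.eq_of_mem_replicate hx]; omega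
  · rcases List.mem_cons.mp hx with rfl | hx
    · omega
    · rw [List.eq_of_mem_replicate hx]; omega

lemma sum_palindromeWitness_add_one (a q : ℕ) :
    (palindromeWitness a q).sum + 1 = (a + 1) * (q + 2) := by
  simp [palindromeWitness, List.sum_replicate]
  ring

lemma partitionWord_palindromeWitness (a q : ℕ) :
    partitionWord (palindromeWitness a q) =
      List.replicate a true ++ List.replicate q false ++ List.replicate a true := by
  cases q with
  | zero => simp [palindromeWitness, partitionWord_singleton, ← two_mul]
  | succ q =>
    have h : (palindromeWitness a (q + 1)).reverse =
        (a + 1) :: (List.replicate q (a + 1) ++ [2 * a + 1]) := by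
      simp [palindromeWitness, List.reverse_replicate, List.replicate_succ']
    have hsub : 2 * a + 1 - (a + 1) = a := by omega
    simp [partitionWord_of_reverse_eq_cons h, wordAux_replicate_self_append, wordAux, hsub,
      List.replicate_succ']

lemma eq_zero_or_eq_zero_of_add_two_mul_add_two_eq {n p q : ℕ} (hn : n = 3 ∨ (n + 1).Prime)
    (h : (p + 2) * (q + 2) = 2 * (n + 1)) : p = 0 ∨ q = 0 := by
  by_contra! hpq
  obtain ⟨hp, hq⟩ : 1 ≤ p ∧ 1 ≤ q := by omega
  rcases hn with rfl | hprime
  · nlinarith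
  · rcases hprime.dvd_mul.mp (Dvd.intro_left 2 h.symm) with hdvd | hdvd
    · nlinarith [Nat.le_of_dvd (by omega) hdvd]
    · nlinarith [Nat.le_of_dvd (by omega) hdvd]

lemma exists_succ_mul_add_two_eq {m : ℕ} (h2 : 2 ≤ m) (h4 : m ≠ 4) (hm : ¬ m.Prime) :
    ∃ a q, 0 < a ∧ 0 < q ∧ (a + 1) * (q + 2) = m := by
  have hd : 2 ≤ m.minFac := (Nat.minFac_prime (by omega)).two_le
  obtain ⟨e, he⟩ := Nat.minFac_dvd m
  have hed : m.minFac ≤ e := Nat.le_of_mul_le_mul_left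
    (by nlinarith [Nat.minFac_sq_le_self (by omega) hm]) (by omega)
  have he3 : 3 ≤ e := by
    by_contra!
    rw [show m.minFac = 2 by omega, show e = 2 by omega] at he
    exact h4 he
  refine ⟨m.minFac - 1, e - 2, by omega, by omega, ?_⟩
  rw [Nat.sub_add_cancel (by omega), Nat.sub_add_cancel (by omega : 2 ≤ e)]
  exact he.symm

def reversiblePartitions (n : ℕ) : Set (List ℕ) :=
  {l : List ℕ | IsPartition l ∧ l.sum = n ∧
    ∃ μ : List ℕ, IsPartition μ ∧ μ.sum = n ∧
      partitionWord μ = (partitionWord l).reverse}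

lemma mem_reversiblePartitions_of_palindrome {n : ℕ} {l : List ℕ} (hl : IsPartition l)
    (hsum : l.sum = n) (hpal : (partitionWord l).reverse = partitionWord l) :
    l ∈ reversiblePartitions n :=
  ⟨hl, hsum, l, hl, hsum, hpal.symm⟩

lemma singleton_mem_reversiblePartitions {n : ℕ} (hn : 0 < n) :
    [n] ∈ reversiblePartitions n :=
  mem_reversiblePartitions_of_palindrome ⟨List.pairwise_singleton _ n, by simpa using hn⟩
    List.sum_singleton (by rw [partitionWord_singleton, List.reverse_replicate])

lemma replicate_one_mem_reversiblePartitions {n : ℕ} (hn : 0 < n) :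
    List.replicate n 1 ∈ reversiblePartitions n := by
  obtain ⟨k, rfl⟩ := Nat.exists_eq_add_of_lt hn
  refine mem_reversiblePartitions_of_palindrome
    ⟨List.pairwise_replicate.mpr (.inr le_rfl), fun x hx => by simp [List.eq_of_mem_replicate hx]⟩
    (by simp) ?_
  rw [zero_add, partitionWord_replicate_one, List.reverse_replicate]

lemma palindromeWitness_mem_reversiblePartitions {n a q : ℕ} (h : (a + 1) * (q + 2) = n + 1) :
    palindromeWitness a q ∈ reversiblePartitions n := by
  refine mem_reversiblePartitions_of_palindrome (isPartition_palindromeWitness a q)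
    (by have := sum_palindromeWitness_add_one a q; omega) ?_
  simp [partitionWord_palindromeWitness, List.reverse_replicate]

lemma add_two_mul_add_two_eq_of_mem_reversiblePartitions {n : ℕ} {l : List ℕ} (hn : 0 < n)
    (h : l ∈ reversiblePartitions n) :
    ((partitionWord l).count true + 2) * ((partitionWord l).count false + 2) = 2 * (n + 1) := by
  obtain ⟨hl, hsum, μ, hμ, hμsum, hμl⟩ := h
  have hl_sum := hl.sum_eq (by rintro rfl; simp at hsum; omega)
  have hμ_sum := hμ.sum_eq (by rintro rfl; simp at hμsum; omega)
  rw [hμl, List.count_reverse, List.count_reverse] at hμ_sum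
  have := inversions_add_inversions_reverse (partitionWord l)
  nlinarith

lemma reversiblePartitions_eq_pair {n : ℕ} (hn : 2 ≤ n) (hc : n = 3 ∨ (n + 1).Prime) :
    reversiblePartitions n = {[n], List.replicate n 1} := by
  ext l
  constructor
  · intro h
    have hfac := add_two_mul_add_two_eq_of_mem_reversiblePartitions (by omega) h
    obtain ⟨hl, hsum, -⟩ := h
    have hne : l ≠ [] := by rintro rfl; simp at hsum; omega
    rcases eq_zero_or_eq_zero_of_add_two_mul_add_two_eq hc hfac with h0 | h0
    · exact .inr (hsum ▸ hl.eq_replicate_one_sum h0)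
    · exact .inl (hsum ▸ eq_singleton_sum_of_count_false_partitionWord hne h0)
  · rintro (rfl | rfl)
    · exact singleton_mem_reversiblePartitions (by omega)
    · exact replicate_one_mem_reversiblePartitions (by omega)

lemma singleton_ne_replicate_one {n : ℕ} (hn : n ≠ 1) : [n] ≠ List.replicate n 1 := fun h => by
  have := congrArg List.length h
  simp only [List.length_singleton, List.length_replicate] at this
  omega

lemma ncard_reversiblePartitions_ne_two {n a q : ℕ} (hn : 2 ≤ n) (ha : 0 < a) (hq : 0 < q)
    (hfac : (a + 1) * (q + 2) = n + 1) : (reversiblePartitions n).ncard ≠ 2 := by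
  intro h2
  have hsub : {[n], List.replicate n 1, palindromeWitness a q} ⊆ reversiblePartitions n := by
    rintro l (rfl | rfl | rfl)
    · exact singleton_mem_reversiblePartitions (by omega)
    · exact replicate_one_mem_reversiblePartitions (by omega)
    · exact palindromeWitness_mem_reversiblePartitions hfac
  have hwit₁ : [n] ≠ palindromeWitness a q := by simp [palindromeWitness]; omega
  have hwit₂ : List.replicate n 1 ≠ palindromeWitness a q := fun h => by
    have := List.eq_of_mem_replicate (h ▸ List.mem_cons_self : 2 * a + 1 ∈ List.replicate n 1)
    omega
  have h3 := Set.ncard_le_ncard hsub (Set.finite_of_ncard_ne_zero (by omega))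
  rw [Set.ncard_eq_three.mpr ⟨_, _, _, singleton_ne_replicate_one (by omega), hwit₁, hwit₂, rfl⟩]
    at h3
  omega

/-- for `n ≥ 2`, `R(n) = 2` iff `n = 3` or `n + 1` is prime. -/
theorem palindromePaper_stmt15 (n : ℕ) (hn : 2 ≤ n) :
    RCount n = 2 ↔ n = 3 ∨ Nat.Prime (n + 1) := by
  change (reversiblePartitions n).ncard = 2 ↔ _
  refine ⟨fun h2 => ?_, fun hc => ?_⟩
  · by_contra! hc
    obtain ⟨a, q, ha, hq, hfac⟩ := exists_succ_mul_add_two_eq (by omega) (by omega) hc.2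
    exact ncard_reversiblePartitions_ne_two hn ha hq hfac h2
  · rw [reversiblePartitions_eq_pair hn hc, Set.ncard_pair (singleton_ne_replicate_one (by omega))]
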